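/- arXiv:2303.12785 — 3 statements merged into one kernel-verified Lean document; each statement's English description precedes it below -/
import Mathlib

section
/- Global optimality in the bandit case: suppose θ ∈ ℝ^P is a critical point of the objective, i.e. ∇_θ J(θ) = 0 (in particular this holds for any limit policy of ideal policy-gradient ascent). Define d ∈ ℝ^A by d_a := π_θ(a) ( log(π_θ(a)/π*(a)) − D_KL(π_θ‖π*) ). Then for every eigenvalue–eigenvector pair (λ, e) of the symmetric positive-semidefinite matrix M := (Θ(a,a'))_{a,a'∈A} with λ > 0, one has ⟨d, e⟩ = 0. In particular, if M is invertible (Θ strictly positive definite), then d = 0 and π_θ = π*. -/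
/-!
Write `π_θ = gibbs π̄ h` with logits `h_a = ⟪θ, ψ a⟫ / τ`. The objective satisfies the Gibbs
variational identity `J(θ) = τ log Z* - τ KL(π_θ ‖ π*)`, and the gradient of
`h ↦ KL(gibbs π̄ h ‖ π*)` in the logits is exactly the vector `d`. By the chain rule through the
linear logits, `∇J(θ) = -∑ a, d a • ψ a`, so at a critical point `d ᵥ* M = 0` for the Gram matrix
`M`: `d` is a null vector of `M`, hence orthogonal to every eigenvector with nonzero eigenvalue,
and `d = 0` when `M` is invertible. Finally `d = 0` makes `log (π_θ / π*)` constant, and two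
probability vectors with constant ratio coincide.
-/

open scoped RealInnerProductSpace
open Matrix

lemma hasFDerivAt_inner_div_const {F : Type*} [NormedAddCommGroup F] [InnerProductSpace ℝ F]
    (v : F) (τ : ℝ) (x : F) : HasFDerivAt (fun y => ⟪y, v⟫ / τ) (τ⁻¹ • innerSL ℝ v) x := by
  simpa only [innerSL_apply_apply, real_inner_comm v, div_eq_mul_inv] using
    (innerSL ℝ v).hasFDerivAt.mul_const τ⁻¹

section GibbsPolicy

open Real Finset

variable {A : Type*} [Fintype A]

noncomputable def gibbs (q f : A → ℝ) (a : A) : ℝ := q a * exp (f a) / ∑ b, q b * exp (f b)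

noncomputable def logPartition (q f : A → ℝ) : ℝ := log (∑ b, q b * exp (f b))

noncomputable def klDiv (p q : A → ℝ) : ℝ := ∑ a, p a * log (p a / q a)

noncomputable def klLogitGrad (p q : A → ℝ) (a : A) : ℝ := p a * (log (p a / q a) - klDiv p q)

noncomputable def regularizedValue (q r : A → ℝ) (τ : ℝ) (p : A → ℝ) : ℝ :=
  ∑ a, p a * r a - τ * klDiv p q

lemma eq_of_klLogitGrad_eq_zero {p p' : A → ℝ} (hp : ∀ a, 0 < p a) (hp' : ∀ a, 0 < p' a)
    (hsum : ∑ a, p a = 1) (hsum' : ∑ a, p' a = 1) (h : klLogitGrad p p' = 0) : p = p' := by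
  have hprop : ∀ a, p a = exp (klDiv p p') * p' a := by
    intro a
    have hlog : log (p a / p' a) = klDiv p p' := by
      have := congrFun h a
      rw [klLogitGrad, Pi.zero_apply] at this
      linarith [(mul_eq_zero.mp this).resolve_left (hp a).ne']
    rw [← hlog, exp_log (div_pos (hp a) (hp' a)), div_mul_cancel₀ _ (hp' a).ne']
  have hexp : exp (klDiv p p') = 1 := by
    calc exp (klDiv p p') = ∑ a, exp (klDiv p p') * p' a := by rw [← mul_sum, hsum', mul_one]
      _ = 1 := by rw [← hsum]; exact (sum_congr rfl fun a _ => hprop a).symm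
  funext a
  rw [hprop a, hexp, one_mul]

section

variable [Nonempty A] {q : A → ℝ}

lemma partition_pos (hq : ∀ a, 0 < q a) (f : A → ℝ) : 0 < ∑ b, q b * exp (f b) :=
  sum_pos (fun b _ => mul_pos (hq b) (exp_pos _)) univ_nonempty

lemma gibbs_pos (hq : ∀ a, 0 < q a) (f : A → ℝ) (a : A) : 0 < gibbs q f a :=
  div_pos (mul_pos (hq a) (exp_pos _)) (partition_pos hq f)

lemma sum_gibbs (hq : ∀ a, 0 < q a) (f : A → ℝ) : ∑ a, gibbs q f a = 1 := by
  simp only [gibbs, ← sum_div, div_self (partition_pos hq f).ne']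

lemma gibbs_eq_mul_exp_sub_logPartition (hq : ∀ a, 0 < q a) (f : A → ℝ) (a : A) :
    gibbs q f a = q a * exp (f a - logPartition q f) := by
  rw [gibbs, logPartition, exp_sub, exp_log (partition_pos hq f), mul_div_assoc]

lemma log_gibbs_div (hq : ∀ a, 0 < q a) (f : A → ℝ) (a : A) :
    log (gibbs q f a / q a) = f a - logPartition q f := by
  rw [gibbs_eq_mul_exp_sub_logPartition hq, mul_div_cancel_left₀ _ (hq a).ne', log_exp]

variable {E : Type*} [NormedAddCommGroup E] [NormedSpace ℝ E]
  {f : E → A → ℝ} {f' : A → E →L[ℝ] ℝ} {x : E}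

lemma hasFDerivAt_logPartition (hq : ∀ a, 0 < q a)
    (hf : ∀ a, HasFDerivAt (fun y => f y a) (f' a) x) :
    HasFDerivAt (fun y => logPartition q (f y)) (∑ b, gibbs q (f x) b • f' b) x := by
  have hZ : HasFDerivAt (fun y => ∑ b, q b * exp (f y b))
      (∑ b, (q b * exp (f x b)) • f' b) x :=
    HasFDerivAt.fun_sum fun b _ => by
      simpa only [smul_smul] using ((hf b).exp).const_mul (q b)
  refine (hZ.log (partition_pos hq (f x)).ne').congr_fderiv ?_
  simp only [smul_sum, smul_smul, gibbs, div_eq_inv_mul]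

lemma hasFDerivAt_gibbs (hq : ∀ a, 0 < q a)
    (hf : ∀ a, HasFDerivAt (fun y => f y a) (f' a) x) (a : A) :
    HasFDerivAt (fun y => gibbs q (f y) a)
      (gibbs q (f x) a • (f' a - ∑ b, gibbs q (f x) b • f' b)) x := by
  have h := (((hf a).fun_sub (hasFDerivAt_logPartition hq hf)).exp).const_mul (q a)
  simpa only [smul_smul, ← gibbs_eq_mul_exp_sub_logPartition hq] using h

lemma hasFDerivAt_klDiv_gibbs (hq : ∀ a, 0 < q a) {p : A → ℝ} (hp : ∀ a, 0 < p a)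
    (hf : ∀ a, HasFDerivAt (fun y => f y a) (f' a) x) :
    HasFDerivAt (fun y => klDiv (gibbs q (f y)) p)
      (∑ a, klLogitGrad (gibbs q (f x)) p a • f' a) x := by
  set w := gibbs q (f x)
  set m := ∑ b, w b • f' b
  have hterm : ∀ a, HasFDerivAt (fun y => gibbs q (f y) a * log (gibbs q (f y) a / p a))
      ((w a * (log (w a / p a) + 1)) • (f' a - m)) x := by
    intro a
    have hg := hasFDerivAt_gibbs hq hf a
    have hlog := (hg.mul_const (p a)⁻¹).log (by positivity [gibbs_pos hq (f x) a, hp a])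
    simp only [← div_eq_mul_inv] at hlog
    refine (hg.mul hlog).congr_fderiv ?_
    have hwa := (gibbs_pos hq (f x) a).ne'
    have hpa := (hp a).ne'
    simp only [smul_smul, ← add_smul]
    congr 1
    field_simp
    ring
  refine (HasFDerivAt.fun_sum fun a _ => hterm a).congr_fderiv ?_
  ext v
  have hsum : ∑ a, w a = 1 := sum_gibbs hq (f x)
  simp only [_root_.sum_apply, _root_.smul_apply, _root_.sub_apply, smul_eq_mul, klLogitGrad,
    klDiv, m]
  set K := ∑ a, w a * log (w a / p a)
  set S := ∑ a, w a * f' a v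
  have hexp : ∀ a, w a * (log (w a / p a) + 1) * (f' a v - S) =
      w a * (log (w a / p a) - K) * f' a v + (K * (w a * f' a v) - S * (w a * log (w a / p a)))
        + (w a * f' a v - S * w a) := fun a => by ring
  simp only [hexp, sum_add_distrib, sum_sub_distrib, ← mul_sum, hsum]
  ring

lemma klDiv_gibbs (hq : ∀ a, 0 < q a) (f : A → ℝ) {p : A → ℝ} (hp : ∑ a, p a = 1) :
    klDiv p (gibbs q f) = klDiv p q - ∑ a, p a * f a + logPartition q f := by
  have hterm : ∀ a, p a * log (p a / gibbs q f a) =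
      p a * log (p a / q a) - p a * f a + p a * logPartition q f := by
    intro a
    rcases eq_or_ne (p a) 0 with hpa | hpa
    · simp [hpa]
    have hqa := (hq a).ne'
    have hga := (gibbs_pos hq f a).ne'
    have hratio : p a / gibbs q f a = (p a / q a) / (gibbs q f a / q a) := by field_simp
    rw [hratio, log_div (by positivity) (by positivity), log_gibbs_div hq]
    ring
  simp only [klDiv, hterm, sum_add_distrib, sum_sub_distrib, ← sum_mul, hp, one_mul]

lemma regularizedValue_eq (hq : ∀ a, 0 < q a) (r : A → ℝ) {τ : ℝ} (hτ : τ ≠ 0) {p : A → ℝ}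
    (hp : ∑ a, p a = 1) :
    regularizedValue q r τ p =
      τ * logPartition q (fun a => r a / τ) - τ * klDiv p (gibbs q fun a => r a / τ) := by
  rw [regularizedValue, klDiv_gibbs hq _ hp]
  have hr : τ * ∑ a, p a * (r a / τ) = ∑ a, p a * r a := by
    rw [mul_sum]
    exact sum_congr rfl fun a _ => by field_simp
  linear_combination -hr

lemma hasFDerivAt_regularizedValue_gibbs (hq : ∀ a, 0 < q a) (r : A → ℝ) {τ : ℝ} (hτ : τ ≠ 0)
    (hf : ∀ a, HasFDerivAt (fun y => f y a) (f' a) x) :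
    HasFDerivAt (fun y => regularizedValue q r τ (gibbs q (f y)))
      (-(τ • ∑ a, klLogitGrad (gibbs q (f x)) (gibbs q fun a => r a / τ) a • f' a)) x := by
  simp only [regularizedValue_eq hq r hτ (sum_gibbs hq _)]
  exact ((hasFDerivAt_klDiv_gibbs hq (gibbs_pos hq fun a => r a / τ) hf).const_mul τ).const_sub
      (τ * logPartition q fun a => r a / τ)

lemma hasGradientAt_regularizedValue_gibbs_inner {F : Type*} [NormedAddCommGroup F]
    [InnerProductSpace ℝ F] [CompleteSpace F] (hq : ∀ a, 0 < q a) (r : A → ℝ) {τ : ℝ}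
    (hτ : τ ≠ 0) (ψ : A → F) (θ : F) :
    HasGradientAt (fun θ' => regularizedValue q r τ (gibbs q fun a => ⟪θ', ψ a⟫ / τ))
      (-∑ a, klLogitGrad (gibbs q fun a => ⟪θ, ψ a⟫ / τ) (gibbs q fun a => r a / τ) a • ψ a)
      θ := by
  refine hasGradientAt_iff_hasFDerivAt.mpr
    ((hasFDerivAt_regularizedValue_gibbs hq r hτ
      fun a => hasFDerivAt_inner_div_const (ψ a) τ θ).congr_fderiv ?_)
  ext v
  simp only [InnerProductSpace.toDual_apply_apply, _root_.neg_apply, inner_neg_left,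
    sum_inner, real_inner_smul_left, _root_.smul_apply, _root_.sum_apply, smul_eq_mul,
    innerSL_apply_apply, neg_inj, mul_sum]
  exact sum_congr rfl fun a _ => by field_simp

end

end GibbsPolicy

lemma Matrix.vecMul_gram_eq_zero {ι F : Type*} [Fintype ι] [NormedAddCommGroup F]
    [InnerProductSpace ℝ F] {v : ι → F} {d : ι → ℝ} (h : ∑ i, d i • v i = 0) :
    d ᵥ* gram ℝ v = 0 := by
  funext j
  simpa [vecMul, dotProduct, sum_inner, real_inner_smul_left] using congrArg (⟪·, v j⟫) h

lemma Matrix.dotProduct_eq_zero_of_vecMul_eq_zero_of_mulVec_eq_smul {n R : Type*} [Fintype n]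
    [CommSemiring R] [NoZeroDivisors R] {M : Matrix n n R} {d e : n → R} {lam : R}
    (hd : d ᵥ* M = 0) (he : M *ᵥ e = lam • e) (hlam : lam ≠ 0) : d ⬝ᵥ e = 0 := by
  have h : lam * (d ⬝ᵥ e) = 0 := by
    rw [← smul_eq_mul, ← dotProduct_smul, ← he, dotProduct_mulVec, hd, zero_dotProduct]
  exact (mul_eq_zero.mp h).resolve_left hlam

theorem bandit_global_optimality_general {A : Type*} [Fintype A] [Nonempty A] [DecidableEq A]
    (τ : ℝ) (hτ : 0 < τ)
    (pibar : A → ℝ) (hpibar_pos : ∀ a, 0 < pibar a)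
    (r : A → ℝ)
    (pistar : A → ℝ)
    (hpistar : ∀ a, pistar a =
      pibar a * Real.exp (r a / τ) / ∑ a', pibar a' * Real.exp (r a' / τ))
    (P : ℕ) (ψ : A → EuclideanSpace ℝ (Fin P))
    (π : EuclideanSpace ℝ (Fin P) → A → ℝ)
    (hπ : ∀ θ a, π θ a =
      pibar a * Real.exp (⟪θ, ψ a⟫ / τ) / ∑ a', pibar a' * Real.exp (⟪θ, ψ a'⟫ / τ))
    (M : Matrix A A ℝ) (hM : ∀ a a', M a a' = ⟪ψ a, ψ a'⟫)
    (J : EuclideanSpace ℝ (Fin P) → ℝ)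
    (hJ : ∀ θ, J θ = (∑ a, π θ a * r a) - τ * ∑ a, π θ a * Real.log (π θ a / pibar a))
    (θ : EuclideanSpace ℝ (Fin P))
    (hcrit : gradient J θ = 0)
    (d : A → ℝ)
    (hd : ∀ a, d a = π θ a * (Real.log (π θ a / pistar a)
        - ∑ b, π θ b * Real.log (π θ b / pistar b))) :
    (∀ (lam : ℝ) (e : A → ℝ), e ≠ 0 → M.mulVec e = lam • e → 0 < lam →
        ∑ a, d a * e a = 0) ∧
      (IsUnit M.det → (d = 0 ∧ ∀ a, π θ a = pistar a)) := by
  obtain rfl : M = gram ℝ ψ := Matrix.ext hM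
  have hπ_eq : ∀ θ', π θ' = gibbs pibar fun a => ⟪θ', ψ a⟫ / τ := fun θ' => funext (hπ θ')
  have hpistar_eq : pistar = gibbs pibar fun a => r a / τ := funext hpistar
  have hJ_eq : J = fun θ' => regularizedValue pibar r τ (π θ') := funext hJ
  have hd_eq : d = klLogitGrad (π θ) pistar := funext hd
  have hgrad : HasGradientAt J (-∑ a, d a • ψ a) θ := by
    have h := hasGradientAt_regularizedValue_gibbs_inner hpibar_pos r hτ.ne' ψ θ
    simp only [← hπ_eq] at h
    rwa [← hpistar_eq, ← hd_eq, ← hJ_eq] at h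
  have hnull : d ᵥ* gram ℝ ψ = 0 :=
    vecMul_gram_eq_zero (neg_eq_zero.mp (hgrad.gradient.symm.trans hcrit))
  refine ⟨fun lam e _ he hlam =>
    dotProduct_eq_zero_of_vecMul_eq_zero_of_mulVec_eq_smul hnull he hlam.ne', fun hdet => ?_⟩
  have hd0 : d = 0 := eq_zero_of_vecMul_eq_zero hdet.ne_zero hnull
  have hπ_pos : ∀ a, 0 < π θ a := hπ_eq θ ▸ gibbs_pos hpibar_pos _
  have hpistar_pos : ∀ a, 0 < pistar a := hpistar_eq ▸ gibbs_pos hpibar_pos _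
  refine ⟨hd0, congrFun (eq_of_klLogitGrad_eq_zero hπ_pos hpistar_pos
    (hπ_eq θ ▸ sum_gibbs hpibar_pos _) (hpistar_eq ▸ sum_gibbs hpibar_pos _) (hd_eq ▸ hd0))⟩

/-- Global optimality in the bandit case. If `θ` is a critical
point of the entropy-regularized objective (`∇_θ J(θ) = 0`), then the vector
`d_a = π_θ(a) (log(π_θ(a)/π*(a)) − D_KL(π_θ‖π*))` is orthogonal to every
eigenvector of the kernel matrix `M = (Θ(a,a'))` with positive eigenvalue; in
particular if `M` is invertible then `π_θ = π*`. -/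
theorem bandit_global_optimality {A : Type*} [Fintype A] [Nonempty A] [DecidableEq A]
    (τ : ℝ) (hτ : 0 < τ)
    (pibar : A → ℝ) (hpibar_pos : ∀ a, 0 < pibar a) (hpibar_sum : ∑ a, pibar a = 1)
    (r : A → ℝ)
    (pistar : A → ℝ)
    (hpistar : ∀ a, pistar a =
      pibar a * Real.exp (r a / τ) / ∑ a', pibar a' * Real.exp (r a' / τ))
    (P : ℕ) (ψ : A → EuclideanSpace ℝ (Fin P))
    (π : EuclideanSpace ℝ (Fin P) → A → ℝ)
    (hπ : ∀ θ a, π θ a =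
      pibar a * Real.exp (⟪θ, ψ a⟫ / τ) / ∑ a', pibar a' * Real.exp (⟪θ, ψ a'⟫ / τ))
    (M : Matrix A A ℝ) (hM : ∀ a a', M a a' = ⟪ψ a, ψ a'⟫)
    (J : EuclideanSpace ℝ (Fin P) → ℝ)
    (hJ : ∀ θ, J θ = (∑ a, π θ a * r a) - τ * ∑ a, π θ a * Real.log (π θ a / pibar a))
    (θ : EuclideanSpace ℝ (Fin P))
    (hcrit : gradient J θ = 0)
    (d : A → ℝ)
    (hd : ∀ a, d a = π θ a * (Real.log (π θ a / pistar a)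
        - ∑ b, π θ b * Real.log (π θ b / pistar b))) :
    (∀ (lam : ℝ) (e : A → ℝ), e ≠ 0 → M.mulVec e = lam • e → 0 < lam →
        ∑ a, d a * e a = 0) ∧
      (IsUnit M.det → (d = 0 ∧ ∀ a, π θ a = pistar a)) :=
  bandit_global_optimality_general τ hτ pibar hpibar_pos r pistar hpistar P ψ π hπ M hM J hJ θ hcrit
    d hd
end

section
/- Per-state gradient of the i-step value function: let the i-step policy be the softmax of linear preferences, π^{(i)}_{θ^{(i)}}(a|s) := π̄(a|s) exp(⟨θ^{(i)}, ψ^{(i)}(a,s)⟩/τ) / Σ_{a'} π̄(a'|s) exp(⟨θ^{(i)}, ψ^{(i)}(a',s)⟩/τ), with the policies π^{(1)},…,π^{(i−1)} fixed (not depending on θ^{(i)}). Then for every state s, ∇_{θ^{(i)}} V^{(i)}_π(s) = Σ_{a∈A} π^{(i)}_{θ^{(i)}}(a|s) ( Q^{(i)}_π(a,s) − τ log(π^{(i)}_{θ^{(i)}}(a|s)/π̄(a|s)) ) ∇_{θ^{(i)}} log π^{(i)}_{θ^{(i)}}(a|s). -/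
open scoped RealInnerProductSpace
open Filter Topology

/-! Differentiating the summand `π (Q - τ log (π / π̄))` gives `(Q - τ log (π / π̄)) dπ - τ dπ`.
The terms `τ dπ` sum to zero because the softmax probabilities sum to one, and
`dπ = π d(log π)` turns the rest into the stated formula. -/

section Entropy

variable {ι E : Type*} [Fintype ι] [NormedAddCommGroup E] [NormedSpace ℝ E]
  {f : ι → E → ℝ} {x : E}

theorem sum_fderiv_eq_zero_of_sum_eq_one {f' : ι → E →L[ℝ] ℝ}
    (hf : ∀ a, HasFDerivAt (f a) (f' a) x) (hsum : ∀ᶠ y in 𝓝 x, ∑ a, f a y = 1) :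
    ∑ a, f' a = 0 :=
  ((HasFDerivAt.fun_sum fun a _ => hf a).congr_of_eventuallyEq (hsum.mono fun _ hy => hy.symm)
    |>.unique (hasFDerivAt_const 1 x))

theorem HasFDerivAt.mul_sub_mul_log_div {g : E → ℝ} {g' : E →L[ℝ] ℝ} (hg : HasFDerivAt g g' x)
    (hgx : g x ≠ 0) (c τ : ℝ) {b : ℝ} (hb : b ≠ 0) :
    HasFDerivAt (fun y => g y * (c - τ * Real.log (g y / b)))
      ((c - τ * Real.log (g x / b) - τ) • g') x := by
  have hlog : HasFDerivAt (fun y => Real.log (g y / b)) ((g x)⁻¹ • g') x := by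
    simp_rw [div_eq_mul_inv]
    convert (hg.mul_const b⁻¹).log (mul_ne_zero hgx (inv_ne_zero hb)) using 1
    rw [smul_smul]
    congr 1
    field_simp
  refine (hg.fun_mul ((hasFDerivAt_const c x).sub (hlog.const_mul τ))).congr_fderiv ?_
  ext v
  simp only [zero_sub, smul_neg, Pi.sub_apply, add_apply, neg_apply, smul_apply, smul_eq_mul]
  field_simp
  ring

theorem fderiv_sum_mul_sub_mul_log_div (hf : ∀ a, DifferentiableAt ℝ (f a) x)
    (hfx : ∀ a, f a x ≠ 0) (c : ι → ℝ) (τ : ℝ) {b : ι → ℝ} (hb : ∀ a, b a ≠ 0)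
    (hsum : ∀ᶠ y in 𝓝 x, ∑ a, f a y = 1) :
    fderiv ℝ (fun y => ∑ a, f a y * (c a - τ * Real.log (f a y / b a))) x
      = ∑ a, (f a x * (c a - τ * Real.log (f a x / b a))) •
          fderiv ℝ (fun y => Real.log (f a y)) x := by
  have hzero := sum_fderiv_eq_zero_of_sum_eq_one (fun a => (hf a).hasFDerivAt) hsum
  have hterm a := (hf a).hasFDerivAt.mul_sub_mul_log_div (hfx a) (c a) τ (hb a)
  rw [(HasFDerivAt.fun_sum fun a _ => hterm a).fderiv]
  have hlog a : fderiv ℝ (fun y => Real.log (f a y)) x = (f a x)⁻¹ • fderiv ℝ (f a) x :=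
    ((hf a).hasFDerivAt.log (hfx a)).fderiv
  calc ∑ a, (c a - τ * Real.log (f a x / b a) - τ) • fderiv ℝ (f a) x
      = ∑ a, (c a - τ * Real.log (f a x / b a)) • fderiv ℝ (f a) x
          - τ • ∑ a, fderiv ℝ (f a) x := by
        simp only [sub_smul, Finset.sum_sub_distrib, Finset.smul_sum]
    _ = _ := by
        rw [hzero, smul_zero, sub_zero]
        refine Finset.sum_congr rfl fun a _ => ?_
        rw [hlog, smul_smul, mul_right_comm, mul_inv_cancel₀ (hfx a), one_mul]

theorem gradient_sum_mul_sub_mul_log_div {F : Type*} [NormedAddCommGroup F]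
    [InnerProductSpace ℝ F] [CompleteSpace F] {f : ι → F → ℝ} {x : F}
    (hf : ∀ a, DifferentiableAt ℝ (f a) x) (hfx : ∀ a, f a x ≠ 0) (c : ι → ℝ) (τ : ℝ)
    {b : ι → ℝ} (hb : ∀ a, b a ≠ 0) (hsum : ∀ᶠ y in 𝓝 x, ∑ a, f a y = 1) :
    gradient (fun y => ∑ a, f a y * (c a - τ * Real.log (f a y / b a))) x
      = ∑ a, (f a x * (c a - τ * Real.log (f a x / b a))) •
          gradient (fun y => Real.log (f a y)) x := by
  simp only [gradient, fderiv_sum_mul_sub_mul_log_div hf hfx c τ hb hsum, map_sum, map_smul]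

end Entropy

section Softmax

variable {ι : Type*} [Fintype ι] [Nonempty ι] {w : ι → ℝ}

noncomputable def weightedSoftmax (w z : ι → ℝ) (a : ι) : ℝ :=
  w a * Real.exp (z a) / ∑ a', w a' * Real.exp (z a')

theorem sum_mul_exp_pos (hw : ∀ a, 0 < w a) (z : ι → ℝ) : 0 < ∑ a, w a * Real.exp (z a) :=
  Finset.sum_pos (fun a _ => mul_pos (hw a) (Real.exp_pos _)) Finset.univ_nonempty

theorem weightedSoftmax_pos (hw : ∀ a, 0 < w a) (z : ι → ℝ) (a : ι) :
    0 < weightedSoftmax w z a :=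
  div_pos (mul_pos (hw a) (Real.exp_pos _)) (sum_mul_exp_pos hw z)

theorem sum_weightedSoftmax (hw : ∀ a, 0 < w a) (z : ι → ℝ) :
    ∑ a, weightedSoftmax w z a = 1 := by
  simp only [weightedSoftmax, ← Finset.sum_div, div_self (sum_mul_exp_pos hw z).ne']

theorem differentiableAt_weightedSoftmax {E : Type*} [NormedAddCommGroup E] [NormedSpace ℝ E]
    {z : E → ι → ℝ} {x : E} (hz : ∀ a, DifferentiableAt ℝ (fun y => z y a) x)
    (hw : ∀ a, 0 < w a) (a : ι) :
    DifferentiableAt ℝ (fun y => weightedSoftmax w (z y) a) x := by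
  have hterm b : DifferentiableAt ℝ (fun y => w b * Real.exp (z y b)) x :=
    (hz b).exp.const_mul _
  have hsum : DifferentiableAt ℝ (fun y => ∑ b, w b * Real.exp (z y b)) x :=
    .fun_sum fun b _ => hterm b
  simpa only [weightedSoftmax, div_eq_mul_inv] using
    (hterm a).fun_mul (hsum.fun_inv (sum_mul_exp_pos hw (z x)).ne')

end Softmax

theorem per_state_gradient_value_function_general
    {S A : Type*} [Fintype A] [Nonempty A]
    (τ : ℝ)
    (pibar : S → A → ℝ) (hpibar_pos : ∀ s a, 0 < pibar s a)
    (i : ℕ)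
    -- value and Q functions of the fixed lower-step policies
    (Q : ℕ → A → S → ℝ)
    -- the parametrized `i`-step softmax policy with linear preferences
    (P : ℕ) (ψ : A → S → EuclideanSpace ℝ (Fin P))
    (πθ : EuclideanSpace ℝ (Fin P) → S → A → ℝ)
    (hπθ : ∀ θ s a, πθ θ s a =
      pibar s a * Real.exp (⟪θ, ψ a s⟫ / τ) /
        ∑ a', pibar s a' * Real.exp (⟪θ, ψ a' s⟫ / τ))
    -- the `i`-step value function as a function of `θ`
    (Vi : EuclideanSpace ℝ (Fin P) → S → ℝ)
    (hVi : ∀ θ s, Vi θ s = ∑ a, πθ θ s a *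
      (Q i a s - τ * Real.log (πθ θ s a / pibar s a)))
    (θ : EuclideanSpace ℝ (Fin P)) (s : S) :
    gradient (fun θ' => Vi θ' s) θ
      = ∑ a, (πθ θ s a * (Q i a s - τ * Real.log (πθ θ s a / pibar s a))) •
          gradient (fun θ' => Real.log (πθ θ' s a)) θ := by
  have hsoftmax θ' a :
      πθ θ' s a = weightedSoftmax (pibar s) (fun a => ⟪θ', ψ a s⟫ / τ) a := hπθ θ' s a
  have hdiff a : DifferentiableAt ℝ (fun θ' => πθ θ' s a) θ := by
    simp only [hsoftmax]
    refine differentiableAt_weightedSoftmax (z := fun θ' b => ⟪θ', ψ b s⟫ / τ)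
      (fun b => ?_) (hpibar_pos s) a
    simpa only [div_eq_mul_inv, id] using
      (differentiableAt_id.inner ℝ (differentiableAt_const (ψ b s))).mul_const τ⁻¹
  have hsum : ∀ᶠ θ' in 𝓝 θ, ∑ a, πθ θ' s a = 1 :=
    .of_forall fun θ' => by simp only [hsoftmax, sum_weightedSoftmax (hpibar_pos s)]
  rw [show (fun θ' => Vi θ' s) = _ from funext (hVi · s)]
  exact gradient_sum_mul_sub_mul_log_div hdiff
    (fun a => by rw [hsoftmax]; exact (weightedSoftmax_pos (hpibar_pos s) _ a).ne')
    (fun a => Q i a s) τ (fun a => (hpibar_pos s a).ne') hsum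

/-- Per-state gradient of the `i`-step value function: with the
policies `π^{(1)},…,π^{(i−1)}` fixed and the `i`-step policy the softmax of
linear preferences with parameter `θ`,
`∇_θ V^{(i)}_π(s) = Σ_a π^{(i)}_θ(a|s)
(Q^{(i)}_π(a,s) − τ log(π^{(i)}_θ(a|s)/π̄(a|s))) ∇_θ log π^{(i)}_θ(a|s)`. -/
theorem per_state_gradient_value_function
    {S A : Type*} [Fintype S] [Fintype A] [Nonempty S] [Nonempty A]
    (τ : ℝ) (hτ : 0 < τ)
    (pibar : S → A → ℝ) (hpibar_pos : ∀ s a, 0 < pibar s a)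
    (hpibar_sum : ∀ s, ∑ a, pibar s a = 1)
    (r : A → S → ℝ)
    (p : S → A → S → ℝ) (hp_nonneg : ∀ s a s', 0 ≤ p s a s')
    (hp_sum : ∀ s a, ∑ s', p s a s' = 1)
    (i : ℕ) (hi : 1 ≤ i)
    -- the fixed lower-step policies (only `π 1, …, π (i-1)` matter)
    (π : ℕ → S → A → ℝ)
    (hπ_pos : ∀ j s a, 0 < π j s a) (hπ_sum : ∀ j s, ∑ a, π j s a = 1)
    -- value and Q functions of the fixed lower-step policies
    (V : ℕ → S → ℝ) (Q : ℕ → A → S → ℝ)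
    (hV0 : ∀ s, V 0 s = 0)
    (hQ : ∀ j a s, Q (j + 1) a s = r a s + ∑ s', p s a s' * V j s')
    (hV : ∀ j s, V (j + 1) s = ∑ a, π (j + 1) s a *
      (Q (j + 1) a s - τ * Real.log (π (j + 1) s a / pibar s a)))
    -- the parametrized `i`-step softmax policy with linear preferences
    (P : ℕ) (ψ : A → S → EuclideanSpace ℝ (Fin P))
    (πθ : EuclideanSpace ℝ (Fin P) → S → A → ℝ)
    (hπθ : ∀ θ s a, πθ θ s a =
      pibar s a * Real.exp (⟪θ, ψ a s⟫ / τ) /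
        ∑ a', pibar s a' * Real.exp (⟪θ, ψ a' s⟫ / τ))
    -- the `i`-step value function as a function of `θ`
    (Vi : EuclideanSpace ℝ (Fin P) → S → ℝ)
    (hVi : ∀ θ s, Vi θ s = ∑ a, πθ θ s a *
      (Q i a s - τ * Real.log (πθ θ s a / pibar s a)))
    (θ : EuclideanSpace ℝ (Fin P)) (s : S) :
    gradient (fun θ' => Vi θ' s) θ
      = ∑ a, (πθ θ s a * (Q i a s - τ * Real.log (πθ θ s a / pibar s a))) •
          gradient (fun θ' => Real.log (πθ θ' s a)) θ :=
  per_state_gradient_value_function_general τ pibar hpibar_pos i Q P ψ πθ hπθ Vi hVi θ s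
end

section
/- Exact gradient-pairing identity for MPG (finite state space): let π_θ be an extended policy with softmax-linear components and disjoint parameters, let 1 ≤ m ≤ n, and suppose π^{(k)}_{θ^{(k)}} = π*^{(k)} for all 1 ≤ k ≤ m−1. Then for every (a,s) ∈ A × S, ⟨∇_{θ^{(m)}} J_n(π_θ), ∇_{θ^{(m)}} log π^{(m)}_{θ^{(m)}}(a|s)⟩ = −(1/τ) Σ_{s'∈S} ρ^{(n−m)}(s') Σ_{a'∈A} π^{(m)}(a'|s') ( log(π^{(m)}(a'|s')/π*^{(m)}(a'|s')) − D_KL(π^{(m)}‖π*^{(m)})(s') ) ( Θ^{(m)}((a,s),(a',s')) − Σ_{a''∈A} π^{(m)}(a''|s) Θ^{(m)}((a'',s),(a',s')) ), where Θ^{(m)}((a,s),(a',s')) := ⟨ψ^{(m)}(a,s), ψ^{(m)}(a',s')⟩. -/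
open scoped RealInnerProductSpace
open Finset

/-!
The components below level `m` are optimal and independent of `θ^{(m)}`, so the Gibbs variational
identity gives `V^{(m)}(s) = τ log Z*(s) - τ D_KL(π^{(m)}_θ ‖ π*^{(m)})(s)`. The components above
level `m` are fixed as well, so a perturbation of `V^{(m)}` travels up to `V^{(n)}` through their
transition matrices, and pairing forward occupancies with backward values gives
`J_n(θ') - J_n(θ) = Σ_s ρ^{(n-m)}(s) (V^{(m)}_{θ'}(s) - V^{(m)}_θ(s))`. Hence
`∇J_n = -τ Σ_s ρ^{(n-m)}(s) ∇D_KL(s)`. For a softmax-linear policy,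
`τ ∇D_KL(π_θ ‖ q) = Σ_b π_b (log (π_b / q_b) - D_KL) ψ_b` and
`τ ∇ log π_a = ψ_a - Σ_b π_b ψ_b`, and pairing the two gives the kernel form.
-/

namespace HasGradientAt
variable {F : Type*} [NormedAddCommGroup F] [InnerProductSpace ℝ F] [CompleteSpace F]
  {f g : F → ℝ} {f' g' x : F}

theorem add (hf : HasGradientAt f f' x) (hg : HasGradientAt g g' x) :
    HasGradientAt (fun y => f y + g y) (f' + g') x := by
  rw [hasGradientAt_iff_hasFDerivAt] at *
  simpa using hf.fun_add hg

theorem sub (hf : HasGradientAt f f' x) (hg : HasGradientAt g g' x) :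
    HasGradientAt (fun y => f y - g y) (f' - g') x := by
  rw [hasGradientAt_iff_hasFDerivAt] at *
  simpa using hf.fun_sub hg

theorem const_mul (c : ℝ) (hf : HasGradientAt f f' x) :
    HasGradientAt (fun y => c * f y) (c • f') x := by
  rw [hasGradientAt_iff_hasFDerivAt] at *
  simpa using hf.const_mul c

theorem mul (hf : HasGradientAt f f' x) (hg : HasGradientAt g g' x) :
    HasGradientAt (fun y => f y * g y) (f x • g' + g x • f') x := by
  rw [hasGradientAt_iff_hasFDerivAt] at *
  simpa using hf.fun_mul hg

theorem log (hf : HasGradientAt f f' x) (hx : f x ≠ 0) :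
    HasGradientAt (fun y => Real.log (f y)) ((f x)⁻¹ • f') x := by
  rw [hasGradientAt_iff_hasFDerivAt] at *
  simpa using hf.log hx

theorem exp (hf : HasGradientAt f f' x) :
    HasGradientAt (fun y => Real.exp (f y)) (Real.exp (f x) • f') x := by
  rw [hasGradientAt_iff_hasFDerivAt] at *
  simpa using hf.exp

theorem fun_sum {ι : Type*} {t : Finset ι} {f : ι → F → ℝ} {f' : ι → F}
    (h : ∀ i ∈ t, HasGradientAt (f i) (f' i) x) :
    HasGradientAt (fun y => ∑ i ∈ t, f i y) (∑ i ∈ t, f' i) x := by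
  simp only [hasGradientAt_iff_hasFDerivAt, map_sum] at *
  exact HasFDerivAt.fun_sum h

theorem of_sub_eq_sum {ι : Type*} {t : Finset ι} {g : ι → F → ℝ} {G : ι → F} (w : ι → ℝ)
    (hg : ∀ i ∈ t, HasGradientAt (g i) (G i) x)
    (h : ∀ y, f y - f x = ∑ i ∈ t, w i * (g i y - g i x)) :
    HasGradientAt f (∑ i ∈ t, w i • G i) x := by
  have hf : f = fun y => (f x - ∑ i ∈ t, w i * g i x) + ∑ i ∈ t, w i * g i y := by
    funext y
    linarith [h y, show ∑ i ∈ t, w i * (g i y - g i x) =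
      ∑ i ∈ t, w i * g i y - ∑ i ∈ t, w i * g i x by simp only [mul_sub, sum_sub_distrib]]
  rw [hf]
  simpa using (hasGradientAt_const (𝕜 := ℝ) x _).add
    (fun_sum fun i hi => (hg i hi).const_mul (w i))

end HasGradientAt

theorem hasGradientAt_inner_left {F : Type*} [NormedAddCommGroup F] [InnerProductSpace ℝ F]
    [CompleteSpace F] (v x : F) :
    HasGradientAt (fun y : F => ⟪y, v⟫) v x := by
  have h : (fun y : F => ⟪y, v⟫) = InnerProductSpace.toDual ℝ F v := by
    funext y
    simp [real_inner_comm]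
  rw [hasGradientAt_iff_hasFDerivAt, h]
  exact (InnerProductSpace.toDual ℝ F v).hasFDerivAt

noncomputable def softmax {A : Type*} [Fintype A] (c : A → ℝ) (τ : ℝ) (f : A → ℝ) (a : A) : ℝ :=
  c a * Real.exp (f a / τ) / ∑ b, c b * Real.exp (f b / τ)

noncomputable def relEntropy {A : Type*} [Fintype A] (π q : A → ℝ) : ℝ :=
  ∑ b, π b * Real.log (π b / q b)

section Softmax

variable {A : Type*} [Fintype A] [Nonempty A] {c : A → ℝ} (τ : ℝ)

theorem sum_mul_exp_pos_s17 (hc : ∀ b, 0 < c b) (f : A → ℝ) : 0 < ∑ b, c b * Real.exp (f b / τ) :=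
  sum_pos (fun b _ => mul_pos (hc b) (Real.exp_pos _)) univ_nonempty

theorem softmax_pos (hc : ∀ b, 0 < c b) (f : A → ℝ) (a : A) : 0 < softmax c τ f a :=
  div_pos (mul_pos (hc a) (Real.exp_pos _)) (sum_mul_exp_pos_s17 τ hc f)

theorem sum_softmax (hc : ∀ b, 0 < c b) (f : A → ℝ) : ∑ a, softmax c τ f a = 1 := by
  simp only [softmax, ← sum_div]
  exact div_self (sum_mul_exp_pos_s17 τ hc f).ne'

theorem log_softmax (hc : ∀ b, 0 < c b) (f : A → ℝ) (a : A) :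
    Real.log (softmax c τ f a) =
      Real.log (c a) + f a / τ - Real.log (∑ b, c b * Real.exp (f b / τ)) := by
  rw [softmax, Real.log_div (mul_pos (hc a) (Real.exp_pos _)).ne' (sum_mul_exp_pos_s17 τ hc f).ne',
    Real.log_mul (hc a).ne' (Real.exp_pos _).ne', Real.log_exp]

theorem sum_mul_sub_log_div_eq (hc : ∀ b, 0 < c b) (hτ : τ ≠ 0) {π : A → ℝ} (hπ : ∀ b, 0 < π b)
    (hπ1 : ∑ b, π b = 1) (f : A → ℝ) :
    ∑ b, π b * (f b - τ * Real.log (π b / c b)) =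
      τ * Real.log (∑ b, c b * Real.exp (f b / τ)) - τ * relEntropy π (softmax c τ f) := by
  have hlog : ∀ b, f b - τ * Real.log (π b / c b) =
      τ * Real.log (∑ b, c b * Real.exp (f b / τ)) - τ * Real.log (π b / softmax c τ f b) := by
    intro b
    rw [Real.log_div (hπ b).ne' (hc b).ne', Real.log_div (hπ b).ne' (softmax_pos τ hc f b).ne',
      log_softmax τ hc]
    field_simp
    ring
  simp only [hlog, relEntropy, mul_sub, sum_sub_distrib, ← sum_mul, hπ1, one_mul, mul_sum]
  simp only [mul_left_comm]

variable {F : Type*} [NormedAddCommGroup F] [InnerProductSpace ℝ F] [CompleteSpace F]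

theorem hasGradientAt_log_sum_mul_exp (hc : ∀ b, 0 < c b) (φ : A → F) (θ : F) :
    HasGradientAt (fun θ => Real.log (∑ b, c b * Real.exp (⟪θ, φ b⟫ / τ)))
      (τ⁻¹ • ∑ b, softmax c τ (fun b => ⟪θ, φ b⟫) b • φ b) θ := by
  have hZ : HasGradientAt (fun θ => ∑ b, c b * Real.exp (⟪θ, φ b⟫ / τ))
      (∑ b, c b • Real.exp (⟪θ, φ b⟫ / τ) • τ⁻¹ • φ b) θ := by
    refine HasGradientAt.fun_sum fun b _ => ((HasGradientAt.exp ?_).const_mul (c b))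
    simpa only [div_eq_inv_mul] using (hasGradientAt_inner_left (φ b) θ).const_mul τ⁻¹
  convert hZ.log (sum_mul_exp_pos_s17 τ hc _).ne' using 1
  simp only [softmax, smul_sum, smul_smul, div_eq_inv_mul]
  refine sum_congr rfl fun b _ => ?_
  congr 1
  ring

theorem hasGradientAt_log_softmax_inner (hc : ∀ b, 0 < c b) (φ : A → F) (a : A) (θ : F) :
    HasGradientAt (fun θ => Real.log (softmax c τ (fun b => ⟪θ, φ b⟫) a))
      (τ⁻¹ • (φ a - ∑ b, softmax c τ (fun b => ⟪θ, φ b⟫) b • φ b)) θ := by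
  simp only [log_softmax τ hc, smul_sub]
  have hlin : HasGradientAt (fun θ => ⟪θ, φ a⟫ / τ) (τ⁻¹ • φ a) θ := by
    simpa only [div_eq_inv_mul] using (hasGradientAt_inner_left (φ a) θ).const_mul τ⁻¹
  simpa using ((hasGradientAt_const (𝕜 := ℝ) θ (Real.log (c a))).add hlin).sub
    (hasGradientAt_log_sum_mul_exp τ hc φ θ)

end Softmax

section RelEntropy

variable {A : Type*} [Fintype A] {F : Type*} [NormedAddCommGroup F] [InnerProductSpace ℝ F]

theorem sum_mul_smul_sub_sum_smul (w X : A → ℝ) (φ : A → F) :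
    ∑ b, (w b * X b) • (φ b - ∑ b', w b' • φ b') =
      ∑ b, (w b * (X b - ∑ b', w b' * X b')) • φ b := by
  have hmean : ∑ b, (w b * X b) • ∑ b', w b' • φ b' = ∑ b, (w b * ∑ b', w b' * X b') • φ b := by
    rw [← sum_smul, smul_sum]
    exact sum_congr rfl fun b _ => by rw [smul_smul, mul_comm]
  simp only [smul_sub, mul_sub, sub_smul, sum_sub_distrib, hmean]

variable [CompleteSpace F]

theorem hasGradientAt_relEntropy {π : F → A → ℝ} {q : A → ℝ} {G : A → F} {θ : F}
    (hπ : ∀ θ b, 0 < π θ b) (hq : ∀ b, 0 < q b)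
    (hG : ∀ b, HasGradientAt (fun θ => Real.log (π θ b)) (G b) θ) :
    HasGradientAt (fun θ => relEntropy (π θ) q)
      (∑ b, (π θ b * (Real.log (π θ b / q b) + 1)) • G b) θ := by
  refine HasGradientAt.fun_sum fun b _ => ?_
  have hπb : HasGradientAt (fun θ => π θ b) (π θ b • G b) θ := by
    simpa only [Real.exp_log (hπ _ b)] using (hG b).exp
  have hL : HasGradientAt (fun θ => Real.log (π θ b / q b)) (G b) θ := by
    simpa only [Real.log_div (hπ _ b).ne' (hq b).ne', sub_zero] using
      (hG b).sub (hasGradientAt_const (𝕜 := ℝ) θ (Real.log (q b)))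
  convert hπb.mul hL using 1
  rw [smul_smul, ← add_smul]
  ring_nf

variable [Nonempty A] {c : A → ℝ} (τ : ℝ)

theorem hasGradientAt_relEntropy_softmax_inner (hc : ∀ b, 0 < c b) {q : A → ℝ}
    (hq : ∀ b, 0 < q b) (φ : A → F) (θ : F) :
    HasGradientAt (fun θ => relEntropy (softmax c τ (fun b => ⟪θ, φ b⟫)) q)
      (τ⁻¹ • ∑ b, (softmax c τ (fun b => ⟪θ, φ b⟫) b *
        (Real.log (softmax c τ (fun b => ⟪θ, φ b⟫) b / q b) -
          relEntropy (softmax c τ (fun b => ⟪θ, φ b⟫)) q)) • φ b) θ := by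
  convert hasGradientAt_relEntropy (π := fun θ => softmax c τ (fun b => ⟪θ, φ b⟫))
    (fun θ => softmax_pos τ hc _) hq
    (fun b => hasGradientAt_log_softmax_inner τ hc φ b θ) using 1
  simp only [smul_comm _ τ⁻¹, ← smul_sum, sum_mul_smul_sub_sum_smul]
  congr 2 with b
  -- the `+ 1` coming from the entropy term is removed by centring, as `∑ b, π b = 1`
  simp only [mul_add, mul_one, sum_add_distrib, sum_softmax τ hc, relEntropy]
  congr 1
  ring

end RelEntropy

section SoftBellman

open Matrix

variable {S A : Type*} [Fintype S] [Fintype A]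

noncomputable def softBackup (τ : ℝ) (pibar : S → A → ℝ) (r : A → S → ℝ) (p : S → A → S → ℝ)
    (π : S → A → ℝ) (W : S → ℝ) (s : S) : ℝ :=
  ∑ a, π s a * (r a s + ∑ s', p s a s' * W s' - τ * Real.log (π s a / pibar s a))

def transitionMatrix (p : S → A → S → ℝ) (π : S → A → ℝ) : Matrix S S ℝ :=
  Matrix.of fun s s' => ∑ a, π s a * p s a s'

variable {τ : ℝ} {pibar : S → A → ℝ} {r : A → S → ℝ} {p : S → A → S → ℝ}

theorem softBackup_sub_softBackup (π : S → A → ℝ) (W W' : S → ℝ) :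
    softBackup τ pibar r p π W - softBackup τ pibar r p π W' =
      transitionMatrix p π *ᵥ (W - W') := by
  funext s
  simp only [Pi.sub_apply, softBackup, transitionMatrix, mulVec, dotProduct, of_apply, sum_mul,
    ← sum_sub_distrib, ← mul_sub]
  rw [sum_comm]
  refine sum_congr rfl fun a _ => ?_
  simp only [mul_assoc, ← mul_sum]
  congr 1
  simp only [mul_sub, sum_sub_distrib]
  ring

theorem eq_of_softBackup {V W : ℕ → S → ℝ} {π π' : ℕ → S → A → ℝ} (h0 : V 0 = W 0)
    (hV : ∀ j, V (j + 1) = softBackup τ pibar r p (π (j + 1)) (V j))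
    (hW : ∀ j, W (j + 1) = softBackup τ pibar r p (π' (j + 1)) (W j))
    {k : ℕ} (hπ : ∀ j, 1 ≤ j → j ≤ k → π j = π' j) : V k = W k := by
  induction k with
  | zero => exact h0
  | succ k ih =>
    rw [hV, hW, hπ (k + 1) le_add_self le_rfl, ih fun j hj hjk => hπ j hj (hjk.trans k.le_succ)]

theorem dotProduct_forward_backward_eq {T : ℕ → Matrix S S ℝ} {ρ D : ℕ → S → ℝ} {m n : ℕ}
    (hmn : m ≤ n) (hρ : ∀ k, ρ (k + 1) = ρ k ᵥ* T (n - k))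
    (hD : ∀ j, m ≤ j → j < n → D (j + 1) = T (j + 1) *ᵥ D j) :
    ρ 0 ⬝ᵥ D n = ρ (n - m) ⬝ᵥ D m := by
  suffices h : ∀ j, m ≤ j → j ≤ n → ρ (n - j) ⬝ᵥ D j = ρ (n - m) ⬝ᵥ D m by
    simpa using h n hmn le_rfl
  intro j hmj
  induction j, hmj using Nat.le_induction with
  | base => exact fun _ => rfl
  | succ j hmj ih =>
    intro hjn
    have hk : n - j = n - (j + 1) + 1 := by omega
    have hT : n - (n - (j + 1)) = j + 1 := by omega
    rw [← ih (Nat.le_of_succ_le hjn), hD j hmj hjn, dotProduct_mulVec, hk, hρ, hT]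

theorem sum_sub_sum_eq_dotProduct_of_softBackup {V V' : ℕ → S → ℝ} {π : ℕ → S → A → ℝ}
    {ρ : ℕ → S → ℝ} {m n : ℕ} (hmn : m ≤ n)
    (hV : ∀ j, m ≤ j → V (j + 1) = softBackup τ pibar r p (π (j + 1)) (V j))
    (hV' : ∀ j, m ≤ j → V' (j + 1) = softBackup τ pibar r p (π (j + 1)) (V' j))
    (hρ0 : ∀ s, ρ 0 s = 1) (hρ : ∀ k, ρ (k + 1) = ρ k ᵥ* transitionMatrix p (π (n - k))) :
    ∑ s, V' n s - ∑ s, V n s = ρ (n - m) ⬝ᵥ (V' m - V m) := by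
  refine Eq.trans ?_ (dotProduct_forward_backward_eq (T := fun j => transitionMatrix p (π j))
    (D := fun j => V' j - V j) hmn hρ
    fun j hmj _ => by rw [hV j hmj, hV' j hmj, softBackup_sub_softBackup])
  simp only [dotProduct, hρ0, one_mul, Pi.sub_apply, sum_sub_distrib]

end SoftBellman

section SoftValue

variable {A : Type*} [Fintype A] [Nonempty A] {c : A → ℝ} {τ : ℝ}
  {F : Type*} [NormedAddCommGroup F] [InnerProductSpace ℝ F] [CompleteSpace F]

theorem hasGradientAt_softValue_softmax_inner (hτ : τ ≠ 0) (hc : ∀ b, 0 < c b) (f : A → ℝ)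
    (φ : A → F) (θ : F) :
    HasGradientAt (fun θ => ∑ b, softmax c τ (fun b => ⟪θ, φ b⟫) b *
        (f b - τ * Real.log (softmax c τ (fun b => ⟪θ, φ b⟫) b / c b)))
      (-∑ b, (softmax c τ (fun b => ⟪θ, φ b⟫) b *
        (Real.log (softmax c τ (fun b => ⟪θ, φ b⟫) b / softmax c τ f b) -
          relEntropy (softmax c τ (fun b => ⟪θ, φ b⟫)) (softmax c τ f))) • φ b) θ := by
  simp only [sum_mul_sub_log_div_eq τ hc hτ (softmax_pos τ hc _) (sum_softmax τ hc _)]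
  convert (hasGradientAt_const (𝕜 := ℝ) θ _).sub
    ((hasGradientAt_relEntropy_softmax_inner τ hc (softmax_pos τ hc f) φ θ).const_mul τ) using 1
  rw [smul_smul, mul_inv_cancel₀ hτ, one_smul, zero_sub]

end SoftValue

theorem mpg_gradient_pairing_identity_general
    {S A : Type*} [Fintype S] [Fintype A] [Nonempty A]
    (τ : ℝ) (hτ : 0 < τ)
    (pibar : S → A → ℝ) (hpibar_pos : ∀ s a, 0 < pibar s a)
    (r : A → S → ℝ)
    (p : S → A → S → ℝ)
    (n : ℕ) (m : ℕ) (hm : 1 ≤ m) (hmn : m ≤ n)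
    (P : ℕ) (ψ : A → S → EuclideanSpace ℝ (Fin P))
    -- the extended policy, as a function of the parameter `θ^{(m)}` of its
    -- `m`-step component; the other components do not depend on `θ^{(m)}`
    (Pol : EuclideanSpace ℝ (Fin P) → ℕ → S → A → ℝ)
    (hPolm : ∀ θ s a, Pol θ m s a =
      pibar s a * Real.exp (⟪θ, ψ a s⟫ / τ) /
        ∑ a', pibar s a' * Real.exp (⟪θ, ψ a' s⟫ / τ))
    (hPolfix : ∀ θ θ' j, j ≠ m → Pol θ j = Pol θ' j)
    -- value and Q functions of the extended policy, defined recursively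
    (V : EuclideanSpace ℝ (Fin P) → ℕ → S → ℝ)
    (Q : EuclideanSpace ℝ (Fin P) → ℕ → A → S → ℝ)
    (hV0 : ∀ θ s, V θ 0 s = 0)
    (hQ : ∀ θ j a s, Q θ (j + 1) a s = r a s + ∑ s', p s a s' * V θ j s')
    (hV : ∀ θ j s, V θ (j + 1) s = ∑ a, Pol θ (j + 1) s a *
      (Q θ (j + 1) a s - τ * Real.log (Pol θ (j + 1) s a / pibar s a)))
    -- occupancy weights (uniform unnormalized initial distribution)
    (ρ : EuclideanSpace ℝ (Fin P) → ℕ → S → ℝ)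
    (hρ0 : ∀ θ s, ρ θ 0 s = 1)
    (hρ : ∀ θ k s', ρ θ (k + 1) s' =
      ∑ s, ρ θ k s * ∑ a, Pol θ (n - k) s a * p s a s')
    -- optimal extended policy and its value and Q functions, defined recursively
    (Vstar : ℕ → S → ℝ) (Qstar : ℕ → A → S → ℝ) (pistar : ℕ → S → A → ℝ)
    (hVstar0 : ∀ s, Vstar 0 s = 0)
    (hQstar : ∀ j a s, Qstar (j + 1) a s = r a s + ∑ s', p s a s' * Vstar j s')
    (hpistar : ∀ j s a, pistar (j + 1) s a =
      pibar s a * Real.exp (Qstar (j + 1) a s / τ) /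
        ∑ a', pibar s a' * Real.exp (Qstar (j + 1) a' s / τ))
    (hVstar : ∀ j s, Vstar (j + 1) s = ∑ a, pistar (j + 1) s a *
      (Qstar (j + 1) a s - τ * Real.log (pistar (j + 1) s a / pibar s a)))
    -- the kernel of the `m`-step feature map
    (Θk : A × S → A × S → ℝ)
    (hΘk : ∀ x y : A × S, Θk x y = ⟪ψ x.1 x.2, ψ y.1 y.2⟫)
    (θ : EuclideanSpace ℝ (Fin P))
    -- the lower-step policies are optimal
    (hlow : ∀ k, 1 ≤ k → k ≤ m - 1 → Pol θ k = pistar k)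
    (a : A) (s : S) :
    ⟪gradient (fun θ' => ∑ s', V θ' n s') θ,
        gradient (fun θ' => Real.log (Pol θ' m s a)) θ⟫
      = -(1 / τ) * ∑ s', ρ θ (n - m) s' * ∑ a', Pol θ m s' a' *
          (Real.log (Pol θ m s' a' / pistar m s' a')
            - ∑ b, Pol θ m s' b * Real.log (Pol θ m s' b / pistar m s' b)) *
          (Θk (a, s) (a', s') - ∑ a'', Pol θ m s a'' * Θk (a'', s) (a', s')) := by
  obtain ⟨k, rfl⟩ : ∃ k, m = k + 1 := ⟨m - 1, by omega⟩
  have hPol : ∀ θ' s', Pol θ' (k + 1) s' = softmax (pibar s') τ (fun b => ⟪θ', ψ b s'⟫) :=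
    fun θ' s' => funext (hPolm θ' s')
  have hstar : ∀ s', pistar (k + 1) s' = softmax (pibar s') τ (fun b => Qstar (k + 1) b s') :=
    fun s' => funext (hpistar k s')
  have hback : ∀ θ' j, V θ' (j + 1) = softBackup τ pibar r p (Pol θ' (j + 1)) (V θ' j) :=
    fun θ' j => funext fun s' => by simp only [hV, hQ, softBackup]
  have hVk : ∀ θ', V θ' k = Vstar k := fun θ' =>
    eq_of_softBackup (funext fun s' => (hV0 θ' s').trans (hVstar0 s').symm) (hback θ')
      (fun j => funext fun s' => by simp only [hVstar, hQstar, softBackup])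
      fun j hj hjk => (hPolfix θ' θ j (by omega)).trans (hlow j hj (by omega))
  have hgradV := fun s' => (hasGradientAt_softValue_softmax_inner hτ.ne' (hpibar_pos s')
    (fun b => Qstar (k + 1) b s') (fun b => ψ b s') θ).congr_of_eventuallyEq
      (f₁ := fun θ' => V θ' (k + 1) s') (Filter.Eventually.of_forall fun θ' => by
        simp only [hback, hVk, softBackup, hPol, hQstar])
  have hgradJ := HasGradientAt.of_sub_eq_sum (t := univ) (f := fun θ' => ∑ s', V θ' n s')
    (ρ θ (n - (k + 1))) (fun s' _ => hgradV s') fun θ' =>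
      sum_sub_sum_eq_dotProduct_of_softBackup (π := Pol θ) hmn (fun j _ => hback θ j)
        (fun j hj => (hback θ' j).trans (by rw [hPolfix θ' θ _ (by omega)])) (hρ0 θ)
        (fun k => funext (hρ θ k))
  have hgradlog := hasGradientAt_log_softmax_inner τ (hpibar_pos s) (fun b => ψ b s) a θ
  simp only [hPol, hstar] at hgradJ hgradlog ⊢
  rw [hgradJ.gradient, hgradlog.gradient]
  have hkernel : ∀ (π : A → ℝ) b s', Θk (a, s) (b, s') - ∑ a'', π a'' * Θk (a'', s) (b, s') =
      ⟪ψ b s', ψ a s - ∑ a'', π a'' • ψ a'' s⟫ := fun π b s' => by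
    simp only [hΘk, inner_sub_right, inner_sum, real_inner_smul_right, real_inner_comm]
  simp only [hkernel, sum_inner, inner_neg_left, real_inner_smul_left, real_inner_smul_right,
    relEntropy]
  rw [mul_sum]
  exact sum_congr rfl fun s' _ => by ring

/-- Exact gradient-pairing identity for MPG (finite state space):
if the components `π^{(1)},…,π^{(m−1)}` coincide with the optimal ones, then for
every `(a,s)`,
`⟪∇_{θ^{(m)}} J_n(π_θ), ∇_{θ^{(m)}} log π^{(m)}(a|s)⟫
 = −(1/τ) Σ_{s'} ρ^{(n−m)}(s') Σ_{a'} π^{(m)}(a'|s')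
   (log(π^{(m)}(a'|s')/π*^{(m)}(a'|s')) − D_KL(π^{(m)}‖π*^{(m)})(s'))
   (Θ^{(m)}((a,s),(a',s')) − Σ_{a''} π^{(m)}(a''|s) Θ^{(m)}((a'',s),(a',s')))`. -/
theorem mpg_gradient_pairing_identity
    {S A : Type*} [Fintype S] [Fintype A] [Nonempty S] [Nonempty A]
    (τ : ℝ) (hτ : 0 < τ)
    (pibar : S → A → ℝ) (hpibar_pos : ∀ s a, 0 < pibar s a)
    (hpibar_sum : ∀ s, ∑ a, pibar s a = 1)
    (r : A → S → ℝ)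
    (p : S → A → S → ℝ) (hp_nonneg : ∀ s a s', 0 ≤ p s a s')
    (hp_sum : ∀ s a, ∑ s', p s a s' = 1)
    (n : ℕ) (m : ℕ) (hm : 1 ≤ m) (hmn : m ≤ n)
    (P : ℕ) (ψ : A → S → EuclideanSpace ℝ (Fin P))
    -- the extended policy, as a function of the parameter `θ^{(m)}` of its
    -- `m`-step component; the other components do not depend on `θ^{(m)}`
    (Pol : EuclideanSpace ℝ (Fin P) → ℕ → S → A → ℝ)
    (hPolm : ∀ θ s a, Pol θ m s a =
      pibar s a * Real.exp (⟪θ, ψ a s⟫ / τ) /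
        ∑ a', pibar s a' * Real.exp (⟪θ, ψ a' s⟫ / τ))
    (hPolfix : ∀ θ θ' j, j ≠ m → Pol θ j = Pol θ' j)
    (hPol_pos : ∀ θ j s a, 0 < Pol θ j s a) (hPol_sum : ∀ θ j s, ∑ a, Pol θ j s a = 1)
    -- value and Q functions of the extended policy, defined recursively
    (V : EuclideanSpace ℝ (Fin P) → ℕ → S → ℝ)
    (Q : EuclideanSpace ℝ (Fin P) → ℕ → A → S → ℝ)
    (hV0 : ∀ θ s, V θ 0 s = 0)
    (hQ : ∀ θ j a s, Q θ (j + 1) a s = r a s + ∑ s', p s a s' * V θ j s')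
    (hV : ∀ θ j s, V θ (j + 1) s = ∑ a, Pol θ (j + 1) s a *
      (Q θ (j + 1) a s - τ * Real.log (Pol θ (j + 1) s a / pibar s a)))
    -- occupancy weights (uniform unnormalized initial distribution)
    (ρ : EuclideanSpace ℝ (Fin P) → ℕ → S → ℝ)
    (hρ0 : ∀ θ s, ρ θ 0 s = 1)
    (hρ : ∀ θ k s', ρ θ (k + 1) s' =
      ∑ s, ρ θ k s * ∑ a, Pol θ (n - k) s a * p s a s')
    -- optimal extended policy and its value and Q functions, defined recursively
    (Vstar : ℕ → S → ℝ) (Qstar : ℕ → A → S → ℝ) (pistar : ℕ → S → A → ℝ)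
    (hVstar0 : ∀ s, Vstar 0 s = 0)
    (hQstar : ∀ j a s, Qstar (j + 1) a s = r a s + ∑ s', p s a s' * Vstar j s')
    (hpistar : ∀ j s a, pistar (j + 1) s a =
      pibar s a * Real.exp (Qstar (j + 1) a s / τ) /
        ∑ a', pibar s a' * Real.exp (Qstar (j + 1) a' s / τ))
    (hVstar : ∀ j s, Vstar (j + 1) s = ∑ a, pistar (j + 1) s a *
      (Qstar (j + 1) a s - τ * Real.log (pistar (j + 1) s a / pibar s a)))
    -- the kernel of the `m`-step feature map
    (Θk : A × S → A × S → ℝ)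
    (hΘk : ∀ x y : A × S, Θk x y = ⟪ψ x.1 x.2, ψ y.1 y.2⟫)
    (θ : EuclideanSpace ℝ (Fin P))
    -- the lower-step policies are optimal
    (hlow : ∀ k, 1 ≤ k → k ≤ m - 1 → Pol θ k = pistar k)
    (a : A) (s : S) :
    ⟪gradient (fun θ' => ∑ s', V θ' n s') θ,
        gradient (fun θ' => Real.log (Pol θ' m s a)) θ⟫
      = -(1 / τ) * ∑ s', ρ θ (n - m) s' * ∑ a', Pol θ m s' a' *
          (Real.log (Pol θ m s' a' / pistar m s' a')
            - ∑ b, Pol θ m s' b * Real.log (Pol θ m s' b / pistar m s' b)) *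
          (Θk (a, s) (a', s') - ∑ a'', Pol θ m s a'' * Θk (a'', s) (a', s')) :=
  mpg_gradient_pairing_identity_general τ hτ pibar hpibar_pos r p n m hm hmn P ψ Pol hPolm hPolfix V
    Q hV0 hQ hV ρ hρ0 hρ Vstar Qstar pistar hVstar0 hQstar hpistar hVstar Θk hΘk θ hlow a s
end
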